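/- Let ξ = ((m_1,n_1),(m_2,n_2)) be a Newton polygon with two segments such that n_2 < m_2 and m_1 < n_1 (i.e. the second slope is < 1/2 and the first slope is > 1/2). Write h_1 = m_1+n_1, h_2 = m_2+n_2. Then the enumeration of the symbol set T(ξ) in strictly increasing order for the linear order of S(ξ) is: (1,1),…,(1,m_1), (1,m_1+1),…,(1,n_1), (2,1),…,(2,n_2), (1,n_1+1),…,(1,h_1), (2,n_2+1),…,(2,m_2), (2,m_2+1),…,(2,h_2). In particular the associated binary word reads 1^{m_1} 0^{n_1−m_1} 1^{n_2} 0^{m_1} 1^{m_2−n_2} 0^{n_2}. -/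

import Mathlib

open scoped Classical

noncomputable section

/-- Symbols `(r, i)` (1-indexed component `r`, 1-indexed position `i`). -/
abbrev Symb : Type := ℕ × ℕ

/-- A Newton polygon: a finite list of coprime pairs `(m_r, n_r)` with `m_r + n_r > 0`
and weakly decreasing slopes `n_r / (m_r + n_r)`. -/
structure NewtonPolygon where
  seg : List (ℕ × ℕ)
  coprime : ∀ p ∈ seg, Nat.Coprime p.1 p.2
  pos : ∀ p ∈ seg, 0 < p.1 + p.2
  slopes : ∀ r q : Fin seg.length, r ≤ q →
    ((seg.get q).2 : ℚ) / (((seg.get q).1 : ℚ) + ((seg.get q).2 : ℚ)) ≤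
      ((seg.get r).2 : ℚ) / (((seg.get r).1 : ℚ) + ((seg.get r).2 : ℚ))

namespace NewtonPolygon

/-- The number `z` of segments. -/
def z (ξ : NewtonPolygon) : ℕ := ξ.seg.length

/-- `m_r` (1-indexed). -/
def m (ξ : NewtonPolygon) (r : ℕ) : ℕ := (ξ.seg.getD (r - 1) (0, 0)).1

/-- `n_r` (1-indexed). -/
def n (ξ : NewtonPolygon) (r : ℕ) : ℕ := (ξ.seg.getD (r - 1) (0, 0)).2

/-- `h_r = m_r + n_r`. -/
def h (ξ : NewtonPolygon) (r : ℕ) : ℕ := ξ.m r + ξ.n r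

/-- Membership in the symbol set `T(ξ) = {(r,i) : 1 ≤ r ≤ z, 1 ≤ i ≤ h_r}`. -/
def mem (ξ : NewtonPolygon) (t : Symb) : Prop :=
  1 ≤ t.1 ∧ t.1 ≤ ξ.z ∧ 1 ≤ t.2 ∧ t.2 ≤ ξ.h t.1

/-- The symbol set `T(ξ)` as a finset. -/
def Tfin (ξ : NewtonPolygon) : Finset Symb :=
  ((Finset.Icc 1 ξ.z) ×ˢ (Finset.Icc 1 (ξ.seg.foldr (fun p s => p.1 + p.2 + s) 0))).filter
    (fun t => t.2 ≤ ξ.h t.1)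

/-- The map `δ : T(ξ) → {0,1}`; `δ(r,i) = 1` iff `i ≤ m_r`. -/
def dlt (ξ : NewtonPolygon) (t : Symb) : ℕ := if t.2 ≤ ξ.m t.1 then 1 else 0

/-- The bijection `π(r, i) = (r, ((i - m_r - 1) mod h_r) + 1)`. -/
def pmap (ξ : NewtonPolygon) (t : Symb) : Symb :=
  (t.1, (((t.2 : ℤ) - (ξ.m t.1 : ℤ) - 1) % ((ξ.h t.1 : ℤ))).toNat + 1)

/-- The inverse of `π`: `π⁻¹(r, i) = (r, ((i + m_r - 1) mod h_r) + 1)`. -/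
def pinv (ξ : NewtonPolygon) (t : Symb) : Symb :=
  (t.1, (((t.2 : ℤ) + (ξ.m t.1 : ℤ) - 1) % ((ξ.h t.1 : ℤ))).toNat + 1)

/-- Binary expansion `b(t) = ∑_{k ≥ 1} δ(π^{-k}(t)) · 2^{-k}`. -/
def bexp (ξ : NewtonPolygon) (t : Symb) : ℝ :=
  ∑' k : ℕ, (ξ.dlt (ξ.pinv^[k + 1] t) : ℝ) / 2 ^ (k + 1)

/-- The linear order on `T(ξ)`: `t < t'` iff `b(t) < b(t')`, or `b(t) = b(t')` and
`t` is in an earlier component. -/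
def slt (ξ : NewtonPolygon) (t t' : Symb) : Prop :=
  ξ.bexp t < ξ.bexp t' ∨ (ξ.bexp t = ξ.bexp t' ∧ t.1 < t'.1)

/-- The length `ℓ(ξ)`: the number of pairs `t < t'` with `δ(t) = 0` and `δ(t') = 1`. -/
def len (ξ : NewtonPolygon) : ℕ :=
  ((ξ.Tfin ×ˢ ξ.Tfin).filter (fun p => ξ.slt p.1 p.2 ∧ ξ.dlt p.1 = 0 ∧ ξ.dlt p.2 = 1)).card

/-- `π' = τ ∘ π`, the permutation of the small modification by `(u, v)`. -/
def pmod (ξ : NewtonPolygon) (u v : Symb) (t : Symb) : Symb := Equiv.swap u v (ξ.pmap t)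

/-- The inverse of `π'`. -/
def pmodInv (ξ : NewtonPolygon) (u v : Symb) (t : Symb) : Symb := ξ.pinv (Equiv.swap u v t)

/-- `b'(t) = ∑_{k ≥ 1} δ(π'^{-k}(t)) · 2^{-k}` of the small modification by `(u, v)`. -/
def bmod (ξ : NewtonPolygon) (u v : Symb) (t : Symb) : ℝ :=
  ∑' k : ℕ, (ξ.dlt ((ξ.pmodInv u v)^[k + 1] t) : ℝ) / 2 ^ (k + 1)

/-- The order of the small modification by `(u, v)`: the order of `S(ξ)` with the
positions of `u` and `v` exchanged. -/
def lt0 (ξ : NewtonPolygon) (u v : Symb) (t t' : Symb) : Prop :=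
  ξ.slt (Equiv.swap u v t) (Equiv.swap u v t')

/-- `R` is a specialization of `S(ξ)` by `(u, v)`: a strict linear order on `T(ξ)`
such that `t ≺ t'` implies `b'(t) ≤ b'(t')`. -/
def IsSpec (ξ : NewtonPolygon) (u v : Symb) (R : Symb → Symb → Prop) : Prop :=
  (∀ t ∈ ξ.Tfin, ¬ R t t) ∧
  (∀ t ∈ ξ.Tfin, ∀ t' ∈ ξ.Tfin, ∀ t'' ∈ ξ.Tfin, R t t' → R t' t'' → R t t'') ∧
  (∀ t ∈ ξ.Tfin, ∀ t' ∈ ξ.Tfin, t ≠ t' → R t t' ∨ R t' t) ∧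
  (∀ t ∈ ξ.Tfin, ∀ t' ∈ ξ.Tfin, R t t' → ξ.bmod u v t ≤ ξ.bmod u v t')

/-- The length `ℓ(≺)` of an order `R`: the number of pairs `t ≺ t'` in `T(ξ)` with
`δ(t) = 0` and `δ(t') = 1`. -/
def lenR (ξ : NewtonPolygon) (R : Symb → Symb → Prop) : ℕ :=
  ((ξ.Tfin ×ˢ ξ.Tfin).filter (fun p => R p.1 p.2 ∧ ξ.dlt p.1 = 0 ∧ ξ.dlt p.2 = 1)).card

/-- There exists a generic specialization of `S(ξ)` by `(u, v)`. -/
def ExGeneric (ξ : NewtonPolygon) (u v : Symb) : Prop :=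
  ∃ R : Symb → Symb → Prop, ξ.IsSpec u v R ∧ (ξ.lenR R : ℤ) = (ξ.len : ℤ) - 1

/-- `α_k = π'^k(u)`. -/
def alpha (ξ : NewtonPolygon) (u v : Symb) (k : ℕ) : Symb := (ξ.pmod u v)^[k] u

/-- `β_k = π'^k(v)`. -/
def beta (ξ : NewtonPolygon) (u v : Symb) (k : ℕ) : Symb := (ξ.pmod u v)^[k] v

/-- The set `A_k` computed with respect to an order `R`. -/
def AsetOf (ξ : NewtonPolygon) (u v : Symb) (R : Symb → Symb → Prop) (k : ℕ) : Finset Symb :=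
  ξ.Tfin.filter (fun t =>
    (if k = 0 then ξ.dlt t = 0 else t.1 ≠ v.1 ∧ ξ.dlt t = ξ.dlt (ξ.alpha u v k)) ∧
    R t (ξ.alpha u v k) ∧ R (ξ.alpha u v (k + 1)) (ξ.pmod u v t))

/-- The maximum of a finset for an order `R`. -/
def maxOf (R : Symb → Symb → Prop) (s : Finset Symb) : Symb :=
  if hmax : ∃ t, t ∈ s ∧ ∀ t' ∈ s, t' ≠ t → R t' t then hmax.choose else (0, 0)

/-- The minimum of a finset for an order `R`. -/
def minOf (R : Symb → Symb → Prop) (s : Finset Symb) : Symb :=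
  if hmin : ∃ t, t ∈ s ∧ ∀ t' ∈ s, t' ≠ t → R t t' then hmin.choose else (0, 0)

/-- The pairs `(t, t')` reversed in a step of Construction A: `t = α_k` and
`α_k <_{k-1} t' ≤_{k-1} w` where `w = π'(t_max)`. -/
def revA (R : Symb → Symb → Prop) (a w : Symb) (t t' : Symb) : Prop :=
  t = a ∧ R t t' ∧ (R t' w ∨ t' = w)

/-- One step of Construction A. -/
def stepA (R : Symb → Symb → Prop) (a w : Symb) : Symb → Symb → Prop :=
  fun t t' => (R t t' ∧ ¬ revA R a w t t') ∨ revA R a w t' t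

/-- The pairs `(t, t')` reversed in a step of Construction B: `t' = β_k` and
`w ≤_{k-1} t <_{k-1} β_k` where `w = π'(t_min)`. -/
def revB (R : Symb → Symb → Prop) (b w : Symb) (t t' : Symb) : Prop :=
  t' = b ∧ R t t' ∧ (R w t ∨ t = w)

/-- One step of Construction B. -/
def stepB (R : Symb → Symb → Prop) (b w : Symb) : Symb → Symb → Prop :=
  fun t t' => (R t t' ∧ ¬ revB R b w t t') ∨ revB R b w t' t

/-- The order `<_k` of Construction A (for `k ≥ 1`, meaningful when `A_{k-1} ≠ ∅`). -/
def ordA (ξ : NewtonPolygon) (u v : Symb) : ℕ → Symb → Symb → Prop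
  | 0 => ξ.lt0 u v
  | k + 1 =>
      stepA (ordA ξ u v k) (ξ.alpha u v (k + 1))
        (ξ.pmod u v (maxOf (ordA ξ u v k) (ξ.AsetOf u v (ordA ξ u v k) k)))

/-- The set `A_k` of Construction A. -/
def Aset (ξ : NewtonPolygon) (u v : Symb) (k : ℕ) : Finset Symb :=
  ξ.AsetOf u v (ordA ξ u v k) k

/-- The set `B_k` computed with respect to an order `R`. -/
def BsetOf (ξ : NewtonPolygon) (u v : Symb) (R : Symb → Symb → Prop) (k : ℕ) : Finset Symb :=
  ξ.Tfin.filter (fun t =>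
    (if k = 0 then ξ.dlt t = 1 else ξ.dlt t = ξ.dlt (ξ.beta u v k)) ∧
    R (ξ.beta u v k) t ∧ R (ξ.pmod u v t) (ξ.beta u v (k + 1)))

/-- The order `<_{a+k}` of Construction B (for `k ≥ 1`, meaningful when `B_{k-1} ≠ ∅`). -/
def ordB (ξ : NewtonPolygon) (u v : Symb) (a : ℕ) : ℕ → Symb → Symb → Prop
  | 0 => ordA ξ u v a
  | k + 1 =>
      stepB (ordB ξ u v a k) (ξ.beta u v (k + 1))
        (ξ.pmod u v (minOf (ordB ξ u v a k) (ξ.BsetOf u v (ordB ξ u v a k) k)))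

/-- The set `B_k` of Construction B. -/
def Bset (ξ : NewtonPolygon) (u v : Symb) (a k : ℕ) : Finset Symb :=
  ξ.BsetOf u v (ordB ξ u v a k) k

end NewtonPolygon


/-- floor-division difference equals the digit indicator -/
lemma divsub (h m y : ℕ) (hh : 0 < h) (hm : m ≤ h) (hy : m ≤ y) :
    (if y % h < m then 1 else 0) = y / h - (y - m) / h := by
  set q := y / h with hq
  set s := y % h with hs
  have hqs : h * q + s = y := Nat.div_add_mod y h
  have hsh : s < h := Nat.mod_lt y hh
  by_cases hcase : s < m
  · have hq1 : 1 ≤ q := by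
      rcases Nat.eq_zero_or_pos q with h0 | h0
      · exfalso; rw [h0, Nat.mul_zero] at hqs; omega
      · exact h0
    have key : y - m = h * (q - 1) + (h + s - m) := by
      have : h * (q - 1) + h = h * q := by
        have : q - 1 + 1 = q := by omega
        calc h * (q - 1) + h = h * (q - 1 + 1) := by ring
          _ = h * q := by rw [this]
      omega
    have hts : h + s - m < h := by omega
    have : (y - m) / h = q - 1 := by
      rw [key, Nat.mul_add_div hh, Nat.div_eq_of_lt hts]
      omega
    simp only [hcase, if_pos]
    omega
  · have key : y - m = h * q + (s - m) := by omega
    have : (y - m) / h = q := by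
      rw [key, Nat.mul_add_div hh, Nat.div_eq_of_lt (by omega)]
      omega
    simp only [hcase, if_neg, not_false_iff]
    omega

/-- existence of arbitrary residues in the orbit -/
lemma exists_mod_eq (m h x t N : ℕ) (hh : 0 < h) (hcop : Nat.Coprime m h) (ht : t < h) :
    ∃ k, N ≤ k ∧ (x + k * m) % h = t := by
  haveI : NeZero h := ⟨hh.ne'⟩
  set u := ZMod.unitOfCoprime m hcop with hu
  set c := ((t : ZMod h) - (x : ZMod h)) * (↑u⁻¹ : ZMod h) with hc
  have hNh : N ≤ N * h := Nat.le_mul_of_pos_right N hh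
  refine ⟨c.val + N * h, by omega, ?_⟩
  have hcast : ((x + (c.val + N * h) * m : ℕ) : ZMod h) = (t : ℕ) := by
    push_cast
    rw [ZMod.natCast_val, ZMod.cast_id]
    have hm : (m : ZMod h) = (u : ZMod h) := (ZMod.coe_unitOfCoprime m hcop).symm
    rw [ZMod.natCast_self]
    rw [hm, hc]
    have : ((t : ZMod h) - (x : ZMod h)) * (↑u⁻¹ : ZMod h) * (u : ZMod h)
        = (t : ZMod h) - (x : ZMod h) := by
      rw [mul_assoc, ← Units.val_mul, inv_mul_cancel, Units.val_one, mul_one]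
    rw [mul_zero, add_zero, this]
    ring
  have := (ZMod.natCast_eq_natCast_iff _ _ _).mp hcast
  have h2 := this.symm
  unfold Nat.ModEq at h2
  rw [Nat.mod_eq_of_lt ht] at h2
  omega

namespace NPAux

open NewtonPolygon

def Fv (m h x j : ℕ) : ℕ := (x + j*m)/h

noncomputable def Sv (m h x : ℕ) : ℝ := ∑' k : ℕ, (Fv m h x (k+1) : ℝ)/2^(k+1)

lemma summable_linear_div (a b : ℝ) : Summable (fun k : ℕ => (a + k*b)/2^k) := by
  have h1 : Summable (fun k : ℕ => a * (1/2:ℝ)^k) := summable_geometric_two.mul_left a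
  have h2 : Summable (fun k : ℕ => b * ((k:ℝ)^1 * (1/2:ℝ)^k)) :=
    (summable_pow_mul_geometric_of_norm_lt_one 1 (by norm_num : ‖(1/2:ℝ)‖ < 1)).mul_left b
  have := h1.add h2
  apply this.congr
  intro k
  rw [div_pow, one_pow]
  field_simp

lemma summable_F1 (m h x : ℕ) : Summable (fun k : ℕ => (Fv m h x (k+1) : ℝ)/2^(k+1)) := by
  refine Summable.of_nonneg_of_le (fun k => by positivity) (fun k => ?_)
    (summable_linear_div ((x:ℝ) + m) m)
  have hnum : (Fv m h x (k+1) : ℝ) ≤ ((x:ℝ) + m) + k*m := by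
    have h1 : Fv m h x (k+1) ≤ x + (k+1)*m := Nat.div_le_self _ _
    have : ((x + (k+1)*m : ℕ) : ℝ) = ((x:ℝ) + m) + k*m := by push_cast; ring
    calc (Fv m h x (k+1) : ℝ) ≤ ((x + (k+1)*m : ℕ) : ℝ) := by exact_mod_cast h1
      _ = _ := this
  have hden : (2:ℝ)^k ≤ 2^(k+1) := by
    apply pow_le_pow_right₀ (by norm_num); omega
  have hnn : (0:ℝ) ≤ ((x:ℝ) + m) + k*m := by positivity
  exact div_le_div₀ hnn hnum (by positivity) hden

lemma summable_F0 (m h x : ℕ) : Summable (fun k : ℕ => (Fv m h x k : ℝ)/2^(k+1)) := by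
  refine Summable.of_nonneg_of_le (fun k => by positivity) (fun k => ?_)
    (summable_linear_div (x:ℝ) m)
  have hnum : (Fv m h x k : ℝ) ≤ (x:ℝ) + k*m := by
    have h1 : Fv m h x k ≤ x + k*m := Nat.div_le_self _ _
    calc (Fv m h x k : ℝ) ≤ ((x + k*m : ℕ) : ℝ) := by exact_mod_cast h1
      _ = (x:ℝ) + k*m := by push_cast; ring
  have hden : (2:ℝ)^k ≤ 2^(k+1) := by
    apply pow_le_pow_right₀ (by norm_num); omega
  exact div_le_div₀ (by positivity) hnum (by positivity) hden

lemma summable_digit (f : ℕ → ℕ) (hf : ∀ k, f k ≤ 1) :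
    Summable (fun k : ℕ => (f k : ℝ)/2^(k+1)) := by
  refine Summable.of_nonneg_of_le (fun k => by positivity) (fun k => ?_)
    summable_geometric_two
  have h1 : (f k : ℝ) ≤ 1 := by exact_mod_cast hf k
  rw [div_pow, one_pow]
  apply div_le_div₀ (by norm_num) h1 (by positivity)
  apply pow_le_pow_right₀ (by norm_num); omega

lemma pinv_iter (ξ : NewtonPolygon) (r mr hr : ℕ) (hm : ξ.m r = mr) (hh : ξ.h r = hr)
    (x : ℕ) (hx : x < hr) (j : ℕ) :
    ξ.pinv^[j] (r, x+1) = (r, (x + j*mr) % hr + 1) := by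
  induction j with
  | zero => simp [Nat.mod_eq_of_lt hx]
  | succ j ih =>
    rw [Function.iterate_succ_apply', ih]
    show ξ.pinv (r, (x + j*mr) % hr + 1) = _
    set y := (x + j*mr) % hr with hy
    have hhr : 0 < hr := by omega
    have hyh : y < hr := Nat.mod_lt _ hhr
    unfold NewtonPolygon.pinv
    simp only [hm, hh]
    have h1 : ((y + 1 : ℕ) : ℤ) + (mr : ℤ) - 1 = ((y + mr : ℕ) : ℤ) := by push_cast; ring
    rw [h1]
    have h2 : (((y + mr : ℕ) : ℤ) % (hr : ℤ)).toNat = (y + mr) % hr := by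
      rw [← Int.natCast_mod]; exact Int.toNat_natCast _
    rw [h2, hy, Nat.mod_add_mod]
    have h3 : x + j * mr + mr = x + (j+1) * mr := by rw [Nat.succ_mul]; omega
    rw [h3]

lemma Fv_mono_j (m h x j : ℕ) : Fv m h x j ≤ Fv m h x (j+1) := by
  apply Nat.div_le_div_right
  rw [Nat.succ_mul]; omega

lemma Fv_mono_x (m h j : ℕ) {x x' : ℕ} (hxx : x ≤ x') : Fv m h x j ≤ Fv m h x' j :=
  Nat.div_le_div_right (by omega)

lemma dlt_pinv (ξ : NewtonPolygon) (r mr hr : ℕ) (hm : ξ.m r = mr) (hh : ξ.h r = hr)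
    (hmh : mr ≤ hr) (x : ℕ) (hx : x < hr) (k : ℕ) :
    (ξ.dlt (ξ.pinv^[k+1] (r, x+1)) : ℝ) = (Fv mr hr x (k+1) : ℝ) - (Fv mr hr x k : ℝ) := by
  rw [pinv_iter ξ r mr hr hm hh x hx]
  have hhr : 0 < hr := by omega
  set y := (x + (k+1)*mr) % hr with hy
  have hdlt : ξ.dlt (r, y+1) = if y < mr then 1 else 0 := by
    unfold NewtonPolygon.dlt
    simp only [hm]
    congr 1
  have hdiv := divsub hr mr (x + (k+1)*mr) hhr hmh (by rw [Nat.succ_mul]; omega)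
  have hsub : x + (k+1)*mr - mr = x + k*mr := by rw [Nat.succ_mul]; omega
  rw [hsub] at hdiv
  rw [hdlt, ← hy] at *
  have hle : Fv mr hr x k ≤ Fv mr hr x (k+1) := Fv_mono_j mr hr x k
  have : (if y < mr then 1 else 0 : ℕ) = Fv mr hr x (k+1) - Fv mr hr x k := hdiv
  rw [this, Nat.cast_sub hle]

lemma dlt_le_one (ξ : NewtonPolygon) (t : Symb) : ξ.dlt t ≤ 1 := by
  unfold NewtonPolygon.dlt; split <;> omega

lemma bexp_eq (ξ : NewtonPolygon) (r mr hr : ℕ) (hm : ξ.m r = mr) (hh : ξ.h r = hr)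
    (hmh : mr ≤ hr) (x : ℕ) (hx : x < hr) :
    ξ.bexp (r, x+1) = Sv mr hr x / 2 := by
  unfold NewtonPolygon.bexp Sv
  have hdig : ∀ k : ℕ, (ξ.dlt (ξ.pinv^[k+1] (r, x+1)) : ℝ)/2^(k+1)
      = (Fv mr hr x (k+1):ℝ)/2^(k+1) - (Fv mr hr x k : ℝ)/2^(k+1) := fun k => by
    rw [dlt_pinv ξ r mr hr hm hh hmh x hx k]; ring
  rw [tsum_congr hdig, Summable.tsum_sub (summable_F1 mr hr x) (summable_F0 mr hr x)]
  have hB : ∑' k : ℕ, (Fv mr hr x k : ℝ)/2^(k+1)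
      = (∑' k : ℕ, (Fv mr hr x (k+1) : ℝ)/2^(k+1)) / 2 := by
    rw [Summable.tsum_eq_zero_add (summable_F0 mr hr x)]
    have h0 : (Fv mr hr x 0 : ℝ) = 0 := by
      have : Fv mr hr x 0 = 0 := by
        unfold Fv; rw [Nat.zero_mul, Nat.add_zero]; exact Nat.div_eq_of_lt hx
      rw [this]; norm_num
    rw [h0]
    have : ∀ k : ℕ, (Fv mr hr x (k+1) : ℝ)/2^(k+1+1)
        = (1/2) * ((Fv mr hr x (k+1) : ℝ)/2^(k+1)) := fun k => by ring
    rw [tsum_congr this, tsum_mul_left]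
    ring
  rw [hB]
  ring

lemma Sv_le (m h m' h' x x' : ℕ)
    (hF : ∀ k : ℕ, Fv m h x (k+1) ≤ Fv m' h' x' (k+1)) : Sv m h x ≤ Sv m' h' x' := by
  apply Summable.tsum_le_tsum _ (summable_F1 m h x) (summable_F1 m' h' x')
  intro k
  gcongr
  exact_mod_cast hF k

lemma Sv_lt (m h m' h' x x' : ℕ)
    (hF : ∀ k : ℕ, Fv m h x (k+1) ≤ Fv m' h' x' (k+1))
    (hstr : ∃ k0 : ℕ, Fv m h x (k0+1) < Fv m' h' x' (k0+1)) : Sv m h x < Sv m' h' x' := by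
  obtain ⟨k0, hk0⟩ := hstr
  apply Summable.tsum_lt_tsum (i := k0) (fun k => by gcongr; exact_mod_cast hF k) _
    (summable_F1 m h x) (summable_F1 m' h' x')
  have hc : (Fv m h x (k0+1) : ℝ) < Fv m' h' x' (k0+1) := by exact_mod_cast hk0
  have hp : (0:ℝ) < 2^(k0+1) := by positivity
  exact div_lt_div_of_pos_right hc hp

lemma Fv_strict (m h : ℕ) (hcop : Nat.Coprime m h) {x x' : ℕ} (hx : x < x') (hx' : x' < h) :
    ∃ k : ℕ, Fv m h x (k+1) < Fv m h x' (k+1) := by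
  have hh : 0 < h := by omega
  obtain ⟨j, hj1, hj2⟩ := exists_mod_eq m h x (h-1) 1 hh hcop (by omega)
  obtain ⟨k, rfl⟩ : ∃ k, j = k+1 := ⟨j-1, by omega⟩
  refine ⟨k, ?_⟩
  set y := x + (k+1)*m with hy
  have key : (y+1)/h = y/h + 1 := by
    have e : h*(y/h+1) = h*(y/h) + h := by ring
    have h4 : y + 1 = h * (y/h + 1) := by
      have := Nat.div_add_mod y h
      omega
    rw [h4, Nat.mul_div_cancel_left _ hh]
  have hle : (y+1)/h ≤ (x' + (k+1)*m)/h := Nat.div_le_div_right (by omega)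
  show y/h < (x' + (k+1)*m)/h
  omega

lemma bexp_lt_same (ξ : NewtonPolygon) (r mr hr : ℕ) (hm : ξ.m r = mr) (hh : ξ.h r = hr)
    (hmh : mr ≤ hr) (hcop : Nat.Coprime mr hr)
    {i j : ℕ} (h1i : 1 ≤ i) (hij : i < j) (hj : j ≤ hr) :
    ξ.bexp (r, i) < ξ.bexp (r, j) := by
  obtain ⟨x, rfl⟩ : ∃ x, i = x + 1 := ⟨i - 1, by omega⟩
  obtain ⟨x', rfl⟩ : ∃ x', j = x' + 1 := ⟨j - 1, by omega⟩
  rw [bexp_eq ξ r mr hr hm hh hmh x (by omega), bexp_eq ξ r mr hr hm hh hmh x' (by omega)]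
  have : Sv mr hr x < Sv mr hr x' := by
    apply Sv_lt
    · exact fun k => Fv_mono_x mr hr (k+1) (by omega)
    · exact Fv_strict mr hr hcop (by omega) (by omega)
  linarith

lemma ineqC (m1 n1 m2 n2 : ℕ) (hs1 : m1 < n1) (hs2 : n2 < m2) (j : ℕ) (hj : 1 ≤ j) :
    Fv m1 (m1+n1) (n1-1) j ≤ Fv m2 (m2+n2) 0 j := by
  obtain ⟨p, rfl⟩ : ∃ p, n1 = p + 1 := ⟨n1 - 1, by omega⟩
  have hred : m1 + (p+1) - 1 = m1 + p := by omega
  have hA : Fv m1 (m1+(p+1)) (p+1-1) j ≤ j/2 := by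
    have hh : 0 < m1+(p+1) := by omega
    have hlt : Fv m1 (m1+(p+1)) (p+1-1) j < j/2 + 1 := by
      unfold Fv
      rw [Nat.div_lt_iff_lt_mul hh]
      have hjq : j ≤ 2*(j/2) + 1 := by omega
      have e1 : j*m1 ≤ (2*(j/2)+1)*m1 := Nat.mul_le_mul_right m1 hjq
      have e2 : (j/2)*(2*m1) ≤ (j/2)*(m1+p) := Nat.mul_le_mul_left (j/2) (by omega)
      have hsimp : p + 1 - 1 = p := by omega
      rw [hsimp]
      nlinarith [e1, e2]
    omega
  have hB : j/2 ≤ Fv m2 (m2+n2) 0 j := by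
    unfold Fv
    rw [Nat.le_div_iff_mul_le (by omega)]
    have e1 : (2*(j/2))*m2 ≤ j*m2 := Nat.mul_le_mul_right m2 (by omega)
    have e2 : (j/2)*n2 ≤ (j/2)*m2 := Nat.mul_le_mul_left (j/2) (by omega)
    nlinarith [e1, e2]
  omega

lemma ineqB (m1 n1 m2 n2 : ℕ) (hs1 : m1 < n1) (hs2 : n2 < m2) (j : ℕ) (hj : 1 ≤ j) :
    Fv m1 (m1+n1) (m1+n1-1) j ≤ Fv m2 (m2+n2) n2 j := by
  obtain ⟨p, rfl⟩ : ∃ p, n1 = p + 1 := ⟨n1 - 1, by omega⟩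
  rw [show m1+(p+1)-1 = m1+p by omega]
  set q := (j+1)/2 with hq
  have hq1 : 1 ≤ q := by omega
  have hA : Fv m1 (m1+(p+1)) (m1+p) j ≤ q := by
    have hh : 0 < m1+(p+1) := by omega
    have hlt : Fv m1 (m1+(p+1)) (m1+p) j < q + 1 := by
      unfold Fv
      rw [Nat.div_lt_iff_lt_mul hh]
      have hjq : j ≤ 2*q := by omega
      have e1 : j*m1 ≤ (2*q)*m1 := Nat.mul_le_mul_right m1 hjq
      have e2 : q*(2*m1+1) ≤ q*(m1+(p+1)) := Nat.mul_le_mul_left q (by omega)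
      nlinarith [e1, e2]
    omega
  have hB : q ≤ Fv m2 (m2+n2) n2 j := by
    unfold Fv
    rw [Nat.le_div_iff_mul_le (by omega)]
    have hjq : 2*q - 1 ≤ j := by omega
    have e1 : (2*q-1)*m2 ≤ j*m2 := Nat.mul_le_mul_right m2 hjq
    have e0 : (2*q-1)*m2 + m2 = 2*(q*m2) := by
      have h2q : 2*q - 1 + 1 = 2*q := by omega
      calc (2*q-1)*m2 + m2 = (2*q-1+1)*m2 := by ring
        _ = (2*q)*m2 := by rw [h2q]
        _ = 2*(q*m2) := by ring
    have e2 : (q-1)*n2 ≤ (q-1)*m2 := Nat.mul_le_mul_left (q-1) (by omega)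
    have e3 : (q-1)*n2 + n2 = q*n2 := by
      have hq' : q - 1 + 1 = q := by omega
      calc (q-1)*n2 + n2 = (q-1+1)*n2 := by ring
        _ = q*n2 := by rw [hq']
    have e4 : (q-1)*m2 + m2 = q*m2 := by
      have hq' : q - 1 + 1 = q := by omega
      calc (q-1)*m2 + m2 = (q-1+1)*m2 := by ring
        _ = q*m2 := by rw [hq']
    nlinarith [e1, e0, e2, e3, e4]
  omega

lemma tsum_half_aux : ∑' k : ℕ, (if k = 0 then (0:ℝ) else (1/2)^(k+1)) = 1/2 := by
  have hsum : Summable (fun k : ℕ => (if k = 0 then (0:ℝ) else (1/2)^(k+1))) := by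
    refine Summable.of_nonneg_of_le (fun k => by positivity) (fun k => ?_)
      summable_geometric_two
    split
    · positivity
    · apply pow_le_pow_of_le_one (by norm_num) (by norm_num); omega
  rw [Summable.tsum_eq_zero_add hsum]
  simp only [if_pos rfl, Nat.add_eq_zero, one_ne_zero, and_false, if_false, zero_add]
  have hcongr : ∀ k : ℕ, ((1:ℝ)/2)^(k+1+1) = (1/4) * (1/2)^k := fun k => by ring
  rw [tsum_congr hcongr, tsum_mul_left, tsum_geometric_two]
  norm_num

lemma bexp_cross_strict (ξ : NewtonPolygon) (m1 n1 m2 n2 : ℕ)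
    (hm1 : ξ.m 1 = m1) (hh1 : ξ.h 1 = m1+n1) (hm2 : ξ.m 2 = m2) (hh2 : ξ.h 2 = m2+n2)
    (hcop1 : Nat.Coprime m1 (m1+n1)) (hs1 : m1 < n1) (hs2 : n2 < m2) (hm1pos : 0 < m1)
    {i j : ℕ} (hj1 : 1 ≤ j) (hjn2 : j ≤ n2) (hi1 : n1+1 ≤ i) (hi2 : i ≤ m1+n1) :
    ξ.bexp (2, j) < ξ.bexp (1, i) := by
  obtain ⟨x, rfl⟩ : ∃ x, i = x + 1 := ⟨i - 1, by omega⟩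
  obtain ⟨x', rfl⟩ : ∃ x', j = x' + 1 := ⟨j - 1, by omega⟩
  have hx1 : n1 ≤ x := by omega
  have hx2 : x < m1 + n1 := by omega
  have hx' : x' < n2 := by omega
  set d : ℕ → ℕ := fun k => ξ.dlt (ξ.pinv^[k+1] (1, x+1)) with hd
  set e : ℕ → ℕ := fun k => ξ.dlt (ξ.pinv^[k+1] (2, x'+1)) with he
  have hd_le : ∀ k, d k ≤ 1 := fun k => dlt_le_one ξ _
  have he_le : ∀ k, e k ≤ 1 := fun k => dlt_le_one ξ _
  have hsd : Summable (fun k : ℕ => (d k : ℝ)/2^(k+1)) := summable_digit d hd_le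
  have hse : Summable (fun k : ℕ => (e k : ℝ)/2^(k+1)) := summable_digit e he_le
  -- first digit of b1 is 1
  have hd0 : d 0 = 1 := by
    show ξ.dlt (ξ.pinv^[0+1] (1, x+1)) = 1
    rw [pinv_iter ξ 1 m1 (m1+n1) hm1 hh1 x (by omega)]
    have hred : x + (0+1)*m1 = x + m1 := by ring
    have hmod : (x + m1) % (m1+n1) = x + m1 - (m1+n1) := by
      rw [Nat.mod_eq_sub_mod (by omega), Nat.mod_eq_of_lt (by omega)]
    rw [hred, hmod]
    unfold NewtonPolygon.dlt
    simp only [hm1]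
    rw [if_pos (by omega)]
  -- a later digit of b1 is also 1
  obtain ⟨j0, hj0N, hj0mod⟩ := exists_mod_eq m1 (m1+n1) x 0 2 (by omega) hcop1 (by omega)
  obtain ⟨k0, rfl⟩ : ∃ k0, j0 = k0 + 1 := ⟨j0 - 1, by omega⟩
  have hk0 : 1 ≤ k0 := by omega
  have hdk0 : d k0 = 1 := by
    show ξ.dlt (ξ.pinv^[k0+1] (1, x+1)) = 1
    rw [pinv_iter ξ 1 m1 (m1+n1) hm1 hh1 x (by omega), hj0mod]
    unfold NewtonPolygon.dlt
    simp only [hm1]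
    rw [if_pos (by omega)]
  -- first digit of b2 is 0
  have he0 : e 0 = 0 := by
    show ξ.dlt (ξ.pinv^[0+1] (2, x'+1)) = 0
    rw [pinv_iter ξ 2 m2 (m2+n2) hm2 hh2 x' (by omega)]
    have hred : x' + (0+1)*m2 = x' + m2 := by ring
    rw [hred, Nat.mod_eq_of_lt (by omega)]
    unfold NewtonPolygon.dlt
    simp only [hm2]
    rw [if_neg (by omega)]
  -- lower bound for b1
  have hb1 : 1/2 + (1/2:ℝ)^(k0+1) ≤ ξ.bexp (1, x+1) := by
    have hsum := Summable.sum_le_tsum ({0, k0} : Finset ℕ) (fun i _ => by positivity) hsd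
    rw [Finset.sum_pair (by omega : (0:ℕ) ≠ k0)] at hsum
    rw [hd0, hdk0] at hsum
    calc 1/2 + (1/2:ℝ)^(k0+1) = ((1:ℕ):ℝ)/2^(0+1) + ((1:ℕ):ℝ)/2^(k0+1) := by
          rw [Nat.cast_one, div_pow, one_pow]; norm_num
      _ ≤ ξ.bexp (1, x+1) := hsum
  -- upper bound for b2
  have hb2 : ξ.bexp (2, x'+1) ≤ 1/2 := by
    have hle : ∀ k : ℕ, (e k : ℝ)/2^(k+1) ≤ (if k = 0 then (0:ℝ) else (1/2)^(k+1)) := by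
      intro k
      by_cases hk : k = 0
      · subst hk; rw [he0, if_pos rfl]; norm_num
      · rw [if_neg hk, div_pow, one_pow]
        have : (e k : ℝ) ≤ 1 := by exact_mod_cast he_le k
        apply div_le_div₀ (by norm_num) this (by positivity) (le_refl _)
    have hsumg : Summable (fun k : ℕ => (if k = 0 then (0:ℝ) else (1/2)^(k+1))) := by
      refine Summable.of_nonneg_of_le (fun k => by positivity) (fun k => ?_)
        summable_geometric_two
      split
      · positivity
      · apply pow_le_pow_of_le_one (by norm_num) (by norm_num); omega
    calc ξ.bexp (2, x'+1) ≤ ∑' k : ℕ, (if k = 0 then (0:ℝ) else (1/2)^(k+1)) :=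
          Summable.tsum_le_tsum hle hse hsumg
      _ = 1/2 := tsum_half_aux
  have hpos : (0:ℝ) < (1/2)^(k0+1) := by positivity
  linarith

lemma mem_block {r a len : ℕ} {s : Symb} (h : s ∈ (List.range' a len).map (fun i => ((r:ℕ), i))) :
    ∃ i, a ≤ i ∧ i < a + len ∧ s = (r, i) := by
  simp only [List.mem_map, List.mem_range'_1] at h
  obtain ⟨i, ⟨h1, h2⟩, rfl⟩ := h
  exact ⟨i, h1, h2, rfl⟩

lemma pairwise_block' {R : Symb → Symb → Prop} {r : ℕ} :
    ∀ (a len : ℕ), (∀ i i', a ≤ i → i < i' → i' < a + len → R (r,i) (r,i')) →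
      List.Pairwise R ((List.range' a len).map (fun i => ((r:ℕ), i))) := by
  intro a len
  induction len generalizing a with
  | zero => intro _; simp
  | succ n ih =>
    intro H
    rw [List.range'_succ, List.map_cons]
    constructor
    · intro s hs
      obtain ⟨i, h1, h2, rfl⟩ := mem_block hs
      exact H a i (le_refl a) (by omega) (by omega)
    · exact ih (a+1) (fun i i' g1 g2 g3 => H i i' (by omega) g2 (by omega))

lemma map_block_replicate (ξ : NewtonPolygon) (r a len c : ℕ)
    (H : ∀ i, a ≤ i → i < a + len → ξ.dlt (r, i) = c) :
    (((List.range' a len).map (fun i => ((r:ℕ), i))).map ξ.dlt) = List.replicate len c := by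
  rw [List.map_map]
  induction len generalizing a with
  | zero => simp
  | succ n ih =>
    rw [List.range'_succ, List.map_cons, List.replicate_succ]
    congr 1
    · exact H a (le_refl a) (by omega)
    · exact ih (a+1) (fun i g1 g2 => H i (by omega) (by omega))

end NPAux

/-- The strictly increasing enumeration of `T(ξ)` for a two-segment Newton polygon with
second slope `< 1/2` and first slope `> 1/2`. -/
def enumList (m1 n1 m2 n2 : ℕ) : List Symb :=
  (List.range' 1 m1).map (fun i => ((1 : ℕ), i)) ++
  (List.range' (m1 + 1) (n1 - m1)).map (fun i => ((1 : ℕ), i)) ++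
  (List.range' 1 n2).map (fun i => ((2 : ℕ), i)) ++
  (List.range' (n1 + 1) m1).map (fun i => ((1 : ℕ), i)) ++
  (List.range' (n2 + 1) (m2 - n2)).map (fun i => ((2 : ℕ), i)) ++
  (List.range' (m2 + 1) n2).map (fun i => ((2 : ℕ), i))

/-- for `ξ = ((m1,n1),(m2,n2))` with `n2 < m2` and `m1 < n1`, the increasing
enumeration of `T(ξ)` is `(1,1),…,(1,m1),(1,m1+1),…,(1,n1),(2,1),…,(2,n2),(1,n1+1),…,(1,h1),
(2,n2+1),…,(2,m2),(2,m2+1),…,(2,h2)`; in particular the binary word reads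
`1^{m1} 0^{n1-m1} 1^{n2} 0^{m1} 1^{m2-n2} 0^{n2}`. -/
theorem statement2 (ξ : NewtonPolygon) (m1 n1 m2 n2 : ℕ)
    (hseg : ξ.seg = [(m1, n1), (m2, n2)]) (hslope2 : n2 < m2) (hslope1 : m1 < n1) :
    List.Pairwise ξ.slt (enumList m1 n1 m2 n2) ∧
    (enumList m1 n1 m2 n2).toFinset = ξ.Tfin ∧
    (enumList m1 n1 m2 n2).map ξ.dlt =
      List.replicate m1 1 ++ List.replicate (n1 - m1) 0 ++ List.replicate n2 1 ++
      List.replicate m1 0 ++ List.replicate (m2 - n2) 1 ++ List.replicate n2 0 := by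
  have hm1 : ξ.m 1 = m1 := by simp [NewtonPolygon.m, hseg]
  have hn1 : ξ.n 1 = n1 := by simp [NewtonPolygon.n, hseg]
  have hm2 : ξ.m 2 = m2 := by simp [NewtonPolygon.m, hseg]
  have hn2 : ξ.n 2 = n2 := by simp [NewtonPolygon.n, hseg]
  have hh1 : ξ.h 1 = m1 + n1 := by rw [NewtonPolygon.h, hm1, hn1]
  have hh2 : ξ.h 2 = m2 + n2 := by rw [NewtonPolygon.h, hm2, hn2]
  have hcop1' : Nat.Coprime m1 n1 := ξ.coprime (m1,n1) (by rw [hseg]; simp)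
  have hcop2' : Nat.Coprime m2 n2 := ξ.coprime (m2,n2) (by rw [hseg]; simp)
  have hcop1 : Nat.Coprime m1 (m1+n1) := by
    rw [Nat.add_comm]; exact Nat.coprime_add_self_right.mpr hcop1'
  have hcop2 : Nat.Coprime m2 (m2+n2) := by
    rw [Nat.add_comm]; exact Nat.coprime_add_self_right.mpr hcop2'
  have hb1 : ∀ i : ℕ, 1 ≤ i → i ≤ m1+n1 → ξ.bexp (1,i) = NPAux.Sv m1 (m1+n1) (i-1) / 2 := by
    intro i h1 h2
    obtain ⟨x, rfl⟩ : ∃ x, i = x+1 := ⟨i-1, by omega⟩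
    rw [NPAux.bexp_eq ξ 1 m1 (m1+n1) hm1 hh1 (by omega) x (by omega)]
    simp
  have hb2 : ∀ j : ℕ, 1 ≤ j → j ≤ m2+n2 → ξ.bexp (2,j) = NPAux.Sv m2 (m2+n2) (j-1) / 2 := by
    intro j h1 h2
    obtain ⟨x, rfl⟩ : ∃ x, j = x+1 := ⟨j-1, by omega⟩
    rw [NPAux.bexp_eq ξ 2 m2 (m2+n2) hm2 hh2 (by omega) x (by omega)]
    simp
  have S11 : ∀ i i' : ℕ, 1 ≤ i → i < i' → i' ≤ m1+n1 → ξ.slt (1,i) (1,i') := by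
    intro i i' g1 g2 g3
    exact Or.inl (NPAux.bexp_lt_same ξ 1 m1 (m1+n1) hm1 hh1 (by omega) hcop1 g1 g2 g3)
  have S22 : ∀ i i' : ℕ, 1 ≤ i → i < i' → i' ≤ m2+n2 → ξ.slt (2,i) (2,i') := by
    intro i i' g1 g2 g3
    exact Or.inl (NPAux.bexp_lt_same ξ 2 m2 (m2+n2) hm2 hh2 (by omega) hcop2 g1 g2 g3)
  have S12 : ∀ i j : ℕ, 1 ≤ i → i ≤ n1 → 1 ≤ j → j ≤ m2+n2 → ξ.slt (1,i) (2,j) := by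
    intro i j gi1 gi2 gj1 gj2
    have key : ξ.bexp (1,i) ≤ ξ.bexp (2,j) := by
      rw [hb1 i gi1 (by omega), hb2 j gj1 gj2]
      have c1 : NPAux.Sv m1 (m1+n1) (i-1) ≤ NPAux.Sv m1 (m1+n1) (n1-1) :=
        NPAux.Sv_le _ _ _ _ _ _ (fun k => NPAux.Fv_mono_x _ _ _ (by omega))
      have c2 : NPAux.Sv m1 (m1+n1) (n1-1) ≤ NPAux.Sv m2 (m2+n2) 0 :=
        NPAux.Sv_le _ _ _ _ _ _
          (fun k => NPAux.ineqC m1 n1 m2 n2 hslope1 hslope2 (k+1) (by omega))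
      have c3 : NPAux.Sv m2 (m2+n2) 0 ≤ NPAux.Sv m2 (m2+n2) (j-1) :=
        NPAux.Sv_le _ _ _ _ _ _ (fun k => NPAux.Fv_mono_x _ _ _ (by omega))
      linarith
    rcases lt_or_eq_of_le key with h | h
    · exact Or.inl h
    · exact Or.inr ⟨h, by norm_num⟩
  have S12b : ∀ i j : ℕ, n1+1 ≤ i → i ≤ m1+n1 → n2+1 ≤ j → j ≤ m2+n2 → ξ.slt (1,i) (2,j) := by
    intro i j gi1 gi2 gj1 gj2
    have key : ξ.bexp (1,i) ≤ ξ.bexp (2,j) := by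
      rw [hb1 i (by omega) gi2, hb2 j (by omega) gj2]
      have c1 : NPAux.Sv m1 (m1+n1) (i-1) ≤ NPAux.Sv m1 (m1+n1) (m1+n1-1) :=
        NPAux.Sv_le _ _ _ _ _ _ (fun k => NPAux.Fv_mono_x _ _ _ (by omega))
      have c2 : NPAux.Sv m1 (m1+n1) (m1+n1-1) ≤ NPAux.Sv m2 (m2+n2) n2 :=
        NPAux.Sv_le _ _ _ _ _ _
          (fun k => NPAux.ineqB m1 n1 m2 n2 hslope1 hslope2 (k+1) (by omega))
      have c3 : NPAux.Sv m2 (m2+n2) n2 ≤ NPAux.Sv m2 (m2+n2) (j-1) :=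
        NPAux.Sv_le _ _ _ _ _ _ (fun k => NPAux.Fv_mono_x _ _ _ (by omega))
      linarith
    rcases lt_or_eq_of_le key with h | h
    · exact Or.inl h
    · exact Or.inr ⟨h, by norm_num⟩
  have S21 : ∀ j i : ℕ, 1 ≤ j → j ≤ n2 → n1+1 ≤ i → i ≤ m1+n1 → ξ.slt (2,j) (1,i) := by
    intro j i gj1 gj2 gi1 gi2
    exact Or.inl (NPAux.bexp_cross_strict ξ m1 n1 m2 n2 hm1 hh1 hm2 hh2 hcop1
      hslope1 hslope2 (by omega) gj1 gj2 gi1 gi2)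
  refine ⟨?_, ?_, ?_⟩
  · unfold enumList
    refine List.pairwise_append.mpr ⟨List.pairwise_append.mpr ⟨List.pairwise_append.mpr
      ⟨List.pairwise_append.mpr ⟨List.pairwise_append.mpr ⟨?_, ?_, ?_⟩, ?_, ?_⟩,
      ?_, ?_⟩, ?_, ?_⟩, ?_, ?_⟩
    · exact NPAux.pairwise_block' 1 m1 (fun i i' g1 g2 g3 => S11 i i' g1 g2 (by omega))
    · exact NPAux.pairwise_block' (m1+1) (n1-m1)
        (fun i i' g1 g2 g3 => S11 i i' (by omega) g2 (by omega))
    · -- L1 vs L2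
      intro s hs s' hs2
      obtain ⟨i, g1, g2, rfl⟩ := NPAux.mem_block hs
      obtain ⟨j, g3, g4, rfl⟩ := NPAux.mem_block hs2
      exact S11 i j (by omega) (by omega) (by omega)
    · exact NPAux.pairwise_block' 1 n2 (fun i i' g1 g2 g3 => S22 i i' g1 g2 (by omega))
    · -- L1++L2 vs L3
      intro s hs s' hs2
      obtain ⟨j, g3, g4, rfl⟩ := NPAux.mem_block hs2
      rcases List.mem_append.mp hs with h | h <;>
        (obtain ⟨i, g1, g2, rfl⟩ := NPAux.mem_block h;
         exact S12 i j (by omega) (by omega) (by omega) (by omega))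
    · exact NPAux.pairwise_block' (n1+1) m1
        (fun i i' g1 g2 g3 => S11 i i' (by omega) g2 (by omega))
    · -- L1++L2++L3 vs L4
      intro s hs s' hs2
      obtain ⟨j, g3, g4, rfl⟩ := NPAux.mem_block hs2
      rcases List.mem_append.mp hs with h12 | h3
      · rcases List.mem_append.mp h12 with h | h <;>
          (obtain ⟨i, g1, g2, rfl⟩ := NPAux.mem_block h;
           exact S11 i j (by omega) (by omega) (by omega))
      · obtain ⟨i, g1, g2, rfl⟩ := NPAux.mem_block h3
        exact S21 i j (by omega) (by omega) (by omega) (by omega)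
    · exact NPAux.pairwise_block' (n2+1) (m2-n2)
        (fun i i' g1 g2 g3 => S22 i i' (by omega) g2 (by omega))
    · -- L1..L4 vs L5
      intro s hs s' hs2
      obtain ⟨j, g3, g4, rfl⟩ := NPAux.mem_block hs2
      rcases List.mem_append.mp hs with h123 | h4
      · rcases List.mem_append.mp h123 with h12 | h3
        · rcases List.mem_append.mp h12 with h | h <;>
            (obtain ⟨i, g1, g2, rfl⟩ := NPAux.mem_block h;
             exact S12 i j (by omega) (by omega) (by omega) (by omega))
        · obtain ⟨i, g1, g2, rfl⟩ := NPAux.mem_block h3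
          exact S22 i j (by omega) (by omega) (by omega)
      · obtain ⟨i, g1, g2, rfl⟩ := NPAux.mem_block h4
        exact S12b i j (by omega) (by omega) (by omega) (by omega)
    · exact NPAux.pairwise_block' (m2+1) n2
        (fun i i' g1 g2 g3 => S22 i i' (by omega) g2 (by omega))
    · -- L1..L5 vs L6
      intro s hs s' hs2
      obtain ⟨j, g3, g4, rfl⟩ := NPAux.mem_block hs2
      rcases List.mem_append.mp hs with h1234 | h5
      · rcases List.mem_append.mp h1234 with h123 | h4
        · rcases List.mem_append.mp h123 with h12 | h3
          · rcases List.mem_append.mp h12 with h | h <;>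
              (obtain ⟨i, g1, g2, rfl⟩ := NPAux.mem_block h;
               exact S12 i j (by omega) (by omega) (by omega) (by omega))
          · obtain ⟨i, g1, g2, rfl⟩ := NPAux.mem_block h3
            exact S22 i j (by omega) (by omega) (by omega)
        · obtain ⟨i, g1, g2, rfl⟩ := NPAux.mem_block h4
          exact S12b i j (by omega) (by omega) (by omega) (by omega)
      · obtain ⟨i, g1, g2, rfl⟩ := NPAux.mem_block h5
        exact S22 i j (by omega) (by omega) (by omega)
  · have hTfin : ∀ r i : ℕ, ((r,i) ∈ ξ.Tfin) ↔ (1 ≤ r ∧ r ≤ 2 ∧ 1 ≤ i ∧ i ≤ ξ.h r) := by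
      intro r i
      unfold NewtonPolygon.Tfin
      rw [Finset.mem_filter, Finset.mem_product, Finset.mem_Icc, Finset.mem_Icc]
      have hz : ξ.z = 2 := by rw [NewtonPolygon.z, hseg]; rfl
      have hfold : ξ.seg.foldr (fun p s => p.1+p.2+s) 0 = m1+n1+(m2+n2) := by
        rw [hseg]; simp
      rw [hz, hfold]
      constructor
      · rintro ⟨⟨⟨hr1, hr2⟩, hi1, hi2⟩, hle⟩; exact ⟨hr1, hr2, hi1, hle⟩
      · rintro ⟨hr1, hr2, hi1, hle⟩
        refine ⟨⟨⟨hr1, hr2⟩, hi1, ?_⟩, hle⟩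
        interval_cases r
        · rw [hh1] at hle; omega
        · rw [hh2] at hle; omega
    have memB : ∀ (r a len i : ℕ), a ≤ i → i < a+len →
        ((r:ℕ),i) ∈ (List.range' a len).map (fun x => ((r:ℕ),x)) :=
      fun r a len i h1 h2 => List.mem_map_of_mem (List.mem_range'_1.mpr ⟨h1, h2⟩)
    ext t
    obtain ⟨r, i⟩ := t
    rw [List.mem_toFinset, hTfin r i]
    unfold enumList
    constructor
    · intro hs
      rcases List.mem_append.mp hs with h12345 | h6
      · rcases List.mem_append.mp h12345 with h1234 | h5
        · rcases List.mem_append.mp h1234 with h123 | h4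
          · rcases List.mem_append.mp h123 with h12 | h3
            · rcases List.mem_append.mp h12 with h | h
              · obtain ⟨a, g1, g2, heq⟩ := NPAux.mem_block h
                injection heq with e1 e2; subst e1; subst e2
                rw [hh1]; omega
              · obtain ⟨a, g1, g2, heq⟩ := NPAux.mem_block h
                injection heq with e1 e2; subst e1; subst e2
                rw [hh1]; omega
            · obtain ⟨a, g1, g2, heq⟩ := NPAux.mem_block h3
              injection heq with e1 e2; subst e1; subst e2
              rw [hh2]; omega
          · obtain ⟨a, g1, g2, heq⟩ := NPAux.mem_block h4
            injection heq with e1 e2; subst e1; subst e2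
            rw [hh1]; omega
        · obtain ⟨a, g1, g2, heq⟩ := NPAux.mem_block h5
          injection heq with e1 e2; subst e1; subst e2
          rw [hh2]; omega
      · obtain ⟨a, g1, g2, heq⟩ := NPAux.mem_block h6
        injection heq with e1 e2; subst e1; subst e2
        rw [hh2]; omega
    · rintro ⟨hr1, hr2, hi1, hle⟩
      interval_cases r
      · rw [hh1] at hle
        by_cases hc : i ≤ m1
        · exact List.mem_append_left _ (List.mem_append_left _ (List.mem_append_left _
            (List.mem_append_left _ (List.mem_append_left _ (memB 1 1 m1 i hi1 (by omega))))))
        · by_cases hc2 : i ≤ n1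
          · exact List.mem_append_left _ (List.mem_append_left _ (List.mem_append_left _
              (List.mem_append_left _ (List.mem_append_right _
                (memB 1 (m1+1) (n1-m1) i (by omega) (by omega))))))
          · exact List.mem_append_left _ (List.mem_append_left _ (List.mem_append_right _
              (memB 1 (n1+1) m1 i (by omega) (by omega))))
      · rw [hh2] at hle
        by_cases hc : i ≤ n2
        · exact List.mem_append_left _ (List.mem_append_left _ (List.mem_append_left _
            (List.mem_append_right _ (memB 2 1 n2 i hi1 (by omega)))))
        · by_cases hc2 : i ≤ m2
          · exact List.mem_append_left _ (List.mem_append_right _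
              (memB 2 (n2+1) (m2-n2) i (by omega) (by omega)))
          · exact List.mem_append_right _ (memB 2 (m2+1) n2 i (by omega) (by omega))
  · unfold enumList
    simp only [List.map_append]
    rw [NPAux.map_block_replicate ξ 1 1 m1 1 (fun i g1 g2 => by
        unfold NewtonPolygon.dlt; simp only [hm1]; rw [if_pos (by omega)]),
      NPAux.map_block_replicate ξ 1 (m1+1) (n1-m1) 0 (fun i g1 g2 => by
        unfold NewtonPolygon.dlt; simp only [hm1]; rw [if_neg (by omega)]),
      NPAux.map_block_replicate ξ 2 1 n2 1 (fun i g1 g2 => by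
        unfold NewtonPolygon.dlt; simp only [hm2]; rw [if_pos (by omega)]),
      NPAux.map_block_replicate ξ 1 (n1+1) m1 0 (fun i g1 g2 => by
        unfold NewtonPolygon.dlt; simp only [hm1]; rw [if_neg (by omega)]),
      NPAux.map_block_replicate ξ 2 (n2+1) (m2-n2) 1 (fun i g1 g2 => by
        unfold NewtonPolygon.dlt; simp only [hm2]; rw [if_pos (by omega)]),
      NPAux.map_block_replicate ξ 2 (m2+1) n2 0 (fun i g1 g2 => by
        unfold NewtonPolygon.dlt; simp only [hm2]; rw [if_neg (by omega)])]
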